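/- arXiv:1609.01931 — 5 statements merged into one kernel-verified Lean document; each statement's English description precedes it below -/
import Mathlib

section
/- Let (p,S) be a partial partition of [n] such that p is non-crossing (as a partition of S with the order induced from the integers). Then among all partial partitions (q,S^c) with support S^c such that (p,S)∨(q,S^c) is a non-crossing partition of [n], there is a greatest one with respect to refinement, and it is given explicitly by: for i < j in S^c, i ∼ j if and only if no element k of {i,…,j}∩S is p-equivalent to an element l of S∖{i,…,j}. (This greatest element is called the Kreweras complement kr(p,S).) -/
namespace NCPaper

/-- The index set `[n] = {1, …, n}` inside `ℕ`. -/
def Idx (n : ℕ) : Set ℕ := Set.Icc 1 n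

/-- `r` is (the equivalence relation of) a partition of the set `S`:
a symmetric, transitive relation on `ℕ` whose domain is exactly `S`.
For `S ⊆ [n]` this encodes a partial partition of `[n]` with support `S`;
its blocks are the equivalence classes. -/
def IsPartitionOn (S : Set ℕ) (r : ℕ → ℕ → Prop) : Prop :=
  (∀ i j, r i j → r j i) ∧ (∀ i j k, r i j → r j k → r i k) ∧ (∀ i, r i i ↔ i ∈ S)

/-- A partition (relation) is non-crossing if there are no `i < j < k < l`
with `i ∼ k`, `j ∼ l` and `i ≁ j`. -/
def NonCrossing (r : ℕ → ℕ → Prop) : Prop :=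
  ∀ i j k l, i < j → j < k → k < l → r i k → r j l → r i j

/-- Refinement order on partitions encoded as relations:
`r ≤ s` iff every block of `r` is contained in a block of `s`. -/
def RelLE (r s : ℕ → ℕ → Prop) : Prop := ∀ i j, r i j → s i j

/-- Join of two partial partitions with complementary (disjoint) supports:
the partition whose blocks are the blocks of `r` together with those of `s`. -/
def relJoin (r s : ℕ → ℕ → Prop) : ℕ → ℕ → Prop := fun i j => r i j ∨ s i j

/-- `k` lies (weakly) between `i` and `j`, i.e. `k ∈ {min i j, …, max i j}`. -/
def Between (i j k : ℕ) : Prop := min i j ≤ k ∧ k ≤ max i j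

/-- The Kreweras complement `kr(r, S)` of the partial partition `(r, S)` of `[n]`:
the relation with support `[n] \ S` in which `i ∼ j` iff no element `k` of
`{i,…,j} ∩ S` is `r`-equivalent to an element `l` of `S \ {i,…,j}`. -/
def krRel (n : ℕ) (S : Set ℕ) (r : ℕ → ℕ → Prop) : ℕ → ℕ → Prop :=
  fun i j => i ∈ Idx n ∧ j ∈ Idx n ∧ i ∉ S ∧ j ∉ S ∧
    ∀ k l, k ∈ S → l ∈ S → Between i j k → ¬ Between i j l → ¬ r k l

/-- Transport of a relation along a map. -/
def mapRel (f : ℕ → ℕ) (r : ℕ → ℕ → Prop) : ℕ → ℕ → Prop :=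
  fun a b => ∃ i j, f i = a ∧ f j = b ∧ r i j

/-- `i ↦ 2i - δ(i)` where `δ(i) = 1` for odd `i` and `δ(i) = 0` for even `i`;
this maps `[2k]` onto `S = {1,4,5,8,…,4k-3,4k} ⊆ [4k]`. -/
def fS (i : ℕ) : ℕ := 2 * i - i % 2

/-- `i ↦ 2i - (1 - δ(i))`; this maps `[2k]` onto `Sᶜ = {2,3,6,7,…} ⊆ [4k]`. -/
def fSc (i : ℕ) : ℕ := 2 * i - (1 - i % 2)

/-- The nested Kreweras complement `kr′(π)` of a partition `π` of `[2k]`: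
transport `π` along `fS` to a partial partition of `[4k]` with support
`fS '' [2k]`, take its Kreweras complement and transport back along `fSc`. -/
def krNested (k : ℕ) (r : ℕ → ℕ → Prop) : ℕ → ℕ → Prop :=
  fun i j => krRel (4 * k) (fS '' Idx (2 * k)) (mapRel fS r) (fSc i) (fSc j)

/-- `π₀`: the partition of `[2k]` with blocks `{2i, 2i+1}`, indices mod `2k`
(so one block is `{2k, 1}`). -/
def piZero (k : ℕ) : ℕ → ℕ → Prop := fun i j =>
  i ∈ Idx (2 * k) ∧ j ∈ Idx (2 * k) ∧
    (i = j ∨ (Even i ∧ j = i + 1) ∨ (Even j ∧ i = j + 1) ∨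
      (i = 1 ∧ j = 2 * k) ∨ (j = 1 ∧ i = 2 * k))

/-- `π₁`: the partition of `[2k]` with blocks `{2i-1, 2i}`, `1 ≤ i ≤ k`. -/
def piOne (k : ℕ) : ℕ → ℕ → Prop := fun i j =>
  i ∈ Idx (2 * k) ∧ j ∈ Idx (2 * k) ∧
    (i = j ∨ (Odd i ∧ j = i + 1) ∨ (Odd j ∧ i = j + 1))

/-- The `i`-th odd position `2i - 1` in `[2n]`. -/
def oddPos (i : ℕ) : ℕ := 2 * i - 1

/-- The `i`-th even position `2i` in `[2n]`. -/
def evenPos (i : ℕ) : ℕ := 2 * i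

/-- The Kreweras complement `K(p)` of a partition `p` of `[n]`: transport `p`
along `i ↦ 2i-1` to the odd positions `σ = {1,3,…,2n-1}` of `[2n]`, take the
Kreweras complement there, and transport back along `i ↦ 2i`. -/
def Kmap (n : ℕ) (r : ℕ → ℕ → Prop) : ℕ → ℕ → Prop :=
  fun i j => krRel (2 * n) (oddPos '' Idx n) (mapRel oddPos r) (evenPos i) (evenPos j)

/-- `p° = (p̂,σ) ∨ (K̂(p),σᶜ)`: the partition of `[2n]` obtained by placing `p`
on the odd positions and `K(p)` on the even positions. -/
def pCirc (n : ℕ) (p : ℕ → ℕ → Prop) : ℕ → ℕ → Prop :=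
  relJoin (mapRel oddPos p) (mapRel evenPos (Kmap n p))

/-- `F(π)` for `π ≥ π₀`: `i ∼ j` iff `2i-1 ∼_π 2j-1`. -/
def Fmap (r : ℕ → ℕ → Prop) : ℕ → ℕ → Prop := fun i j => r (2 * i - 1) (2 * j - 1)

/-- `G(π)` for `π ≥ π₁`: `i ∼ j` iff `2i ∼_π 2j`. -/
def Gmap (r : ℕ → ℕ → Prop) : ℕ → ℕ → Prop := fun i j => r (2 * i) (2 * j)

/-- `B` is a block of the partition (relation) `r`. -/
def IsBlock (r : ℕ → ℕ → Prop) (B : Set ℕ) : Prop := ∃ i, r i i ∧ B = {j | r i j}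

/-- The number `|r|` of blocks of the partition `r`. -/
noncomputable def numBlocks (r : ℕ → ℕ → Prop) : ℕ := {B : Set ℕ | IsBlock r B}.ncard

/-- `B' ⪯ B` for `B = {i₁<…<i_t}`, `B' = {j₁<…<j_{t'}}`: `i₁ < j₁` and `j_{t'} < i_t`. -/
def Nested (B' B : Set ℕ) : Prop := sInf B < sInf B' ∧ sSup B' < sSup B

/-- The depth `d_p(B)` of a block `B`: the maximal number `m` of blocks in a
chain `B = X₁ ⪯ X₂ ⪯ … ⪯ X_m` of blocks of `p`. -/
noncomputable def depth (p : ℕ → ℕ → Prop) (B : Set ℕ) : ℕ :=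
  sSup {m : ℕ | ∃ c : ℕ → Set ℕ, c 1 = B ∧
    (∀ i, 1 ≤ i → i ≤ m → IsBlock p (c i)) ∧
    (∀ i, 1 ≤ i → i < m → Nested (c i) (c (i + 1)))}

/-- `p_{B,B'}`: the partition obtained from `p` by merging the blocks `B` and `B'`. -/
def mergeRel (p : ℕ → ℕ → Prop) (B B' : Set ℕ) : ℕ → ℕ → Prop :=
  fun i j => p i j ∨ (p i i ∧ p j j ∧ i ∈ B ∪ B' ∧ j ∈ B ∪ B')

/-- Two distinct blocks `B, B'` of `p` are adjacent if replacing them by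
`B ∪ B'` yields a non-crossing partition. -/
def Adjacent (p : ℕ → ℕ → Prop) (B B' : Set ℕ) : Prop :=
  IsBlock p B ∧ IsBlock p B' ∧ B ≠ B' ∧ NonCrossing (mergeRel p B B')

/-- The set of the `i` smallest elements of `B`. -/
def lowerPart (B : Set ℕ) (i : ℕ) : Set ℕ := {x ∈ B | (B ∩ Set.Iic x).ncard ≤ i}

/-- The set of the remaining elements of `B` (all but the `i` smallest). -/
def upperPart (B : Set ℕ) (i : ℕ) : Set ℕ := {x ∈ B | i < (B ∩ Set.Iic x).ncard}

/-- `p_{B,i}`: the partition obtained from `p` by splitting the block `B` into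
the block of its `i` smallest elements and the block of its remaining elements. -/
def splitRel (p : ℕ → ℕ → Prop) (B : Set ℕ) (i : ℕ) : ℕ → ℕ → Prop :=
  fun x y => p x y ∧ ((x ∈ lowerPart B i ∧ y ∈ lowerPart B i) ∨
    (x ∈ upperPart B i ∧ y ∈ upperPart B i) ∨ (x ∉ B ∧ y ∉ B))

/-- The `i`-th smallest element of `B` (1-indexed). -/
noncomputable def nthSmall (B : Set ℕ) (i : ℕ) : ℕ :=
  sInf {x | x ∈ B ∧ (B ∩ Set.Iic x).ncard = i}

/-! The defining condition of `krRel n S p i j` says that, away from its endpoints (which lie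
outside `S`), the interval between `i` and `j` is a union of blocks of `p`. Any three points
have a common median, which makes this interval condition transitive, so `krRel n S p` is a
partition. A block of `p` leaving such an interval would cross the arc `i j`; this gives
non-crossingness of the join, and conversely forces every `q` with `p ∨ q` non-crossing to
relate only endpoints of such intervals. -/

namespace IsPartitionOn

variable {S T : Set ℕ} {r s : ℕ → ℕ → Prop}

theorem symm (hr : IsPartitionOn S r) {i j : ℕ} (h : r i j) : r j i := hr.1 i j h

theorem trans (hr : IsPartitionOn S r) {i j k : ℕ} (h₁ : r i j) (h₂ : r j k) : r i k :=
  hr.2.1 i j k h₁ h₂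

theorem mem_left (hr : IsPartitionOn S r) {i j : ℕ} (h : r i j) : i ∈ S :=
  (hr.2.2 i).1 (hr.trans h (hr.symm h))

theorem mem_right (hr : IsPartitionOn S r) {i j : ℕ} (h : r i j) : j ∈ S :=
  hr.mem_left (hr.symm h)

theorem relJoin_mem_iff (hr : IsPartitionOn S r) (hs : IsPartitionOn T s) (hST : Disjoint S T)
    {i j : ℕ} (h : relJoin r s i j) : i ∈ S ↔ j ∈ S := by
  rcases h with h | h
  · exact iff_of_true (hr.mem_left h) (hr.mem_right h)
  · exact iff_of_false (hST.notMem_of_mem_right (hs.mem_left h))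
      (hST.notMem_of_mem_right (hs.mem_right h))

theorem relJoin (hr : IsPartitionOn S r) (hs : IsPartitionOn T s) (hST : Disjoint S T) :
    IsPartitionOn (S ∪ T) (relJoin r s) := by
  refine ⟨fun i j h => h.imp hr.symm hs.symm, fun i j k h₁ h₂ => ?_, fun i => ?_⟩
  · rcases h₁ with h₁ | h₁ <;> rcases h₂ with h₂ | h₂
    · exact Or.inl (hr.trans h₁ h₂)
    · exact absurd (hs.mem_left h₂) (hST.notMem_of_mem_left (hr.mem_right h₁))
    · exact absurd (hs.mem_right h₁) (hST.notMem_of_mem_left (hr.mem_left h₂))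
    · exact Or.inr (hs.trans h₁ h₂)
  · rw [NCPaper.relJoin, hr.2.2 i, hs.2.2 i, Set.mem_union]

end IsPartitionOn

section Kreweras

variable {n : ℕ} {S : Set ℕ} {r : ℕ → ℕ → Prop}

theorem krRel_symm {i j : ℕ} (h : krRel n S r i j) : krRel n S r j i := by
  obtain ⟨hi, hj, hiS, hjS, hc⟩ := h
  refine ⟨hj, hi, hjS, hiS, fun k l hk hl hbk hbl => hc k l hk hl ?_ ?_⟩ <;>
    simp only [Between] at * <;> omega

theorem krRel_self_iff {i : ℕ} : krRel n S r i i ↔ i ∈ Idx n \ S := by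
  refine ⟨fun ⟨hi, _, hiS, _⟩ => ⟨hi, hiS⟩, fun ⟨hi, hiS⟩ => ⟨hi, hi, hiS, hiS, ?_⟩⟩
  intro k l hk _ hbk
  obtain rfl : k = i := by simp only [Between] at hbk; omega
  exact absurd hk hiS

theorem between_of_krRel {i j k l : ℕ} (h : krRel n S r i j) (hk : k ∈ S) (hl : l ∈ S)
    (hkl : r k l) (hbk : Between i j k) : Between i j l :=
  by_contra fun hbl => h.2.2.2.2 k l hk hl hbk hbl hkl

theorem krRel_trans (hsymm : ∀ i j, r i j → r j i) {i j m : ℕ}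
    (h₁ : krRel n S r i j) (h₂ : krRel n S r j m) : krRel n S r i m := by
  refine ⟨h₁.1, h₂.2.1, h₁.2.2.1, h₂.2.2.2.1, fun k l hk hl hik hil hkl => ?_⟩
  have hki : k ≠ i := fun h => h₁.2.2.1 (h ▸ hk)
  have hkj : k ≠ j := fun h => h₂.2.2.1 (h ▸ hk)
  have hkm : k ≠ m := fun h => h₂.2.2.2.1 (h ▸ hk)
  by_cases hij : Between i j k
  · have hlij := between_of_krRel h₁ hk hl hkl hij
    have hljm : Between j m l := by simp only [Between] at *; omega
    -- `k` now lies in all three intervals spanned by `i, j, m`, so it is their median.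
    have hkjm := between_of_krRel h₂ hl hk (hsymm k l hkl) hljm
    simp only [Between] at *; omega
  · have hkjm : Between j m k := by simp only [Between] at *; omega
    have hljm := between_of_krRel h₂ hk hl hkl hkjm
    have hlij : Between i j l := by simp only [Between] at *; omega
    exact hij (between_of_krRel h₁ hl hk (hsymm k l hkl) hlij)

theorem isPartitionOn_krRel (hsymm : ∀ i j, r i j → r j i) :
    IsPartitionOn (Idx n \ S) (krRel n S r) :=
  ⟨fun _ _ => krRel_symm, fun _ _ _ => krRel_trans hsymm, fun _ => krRel_self_iff⟩

theorem nonCrossing_relJoin_krRel (hr : IsPartitionOn S r) (hnc : NonCrossing r) :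
    NonCrossing (relJoin r (krRel n S r)) := by
  rintro i j k l hij hjk hkl (hik | hik) (hjl | hjl)
  · exact Or.inl (hnc i j k l hij hjk hkl hik hjl)
  · have := between_of_krRel hjl (hr.mem_right hik) (hr.mem_left hik) (hr.symm hik)
      (by simp only [Between]; omega)
    simp only [Between] at this; omega
  · have := between_of_krRel hik (hr.mem_left hjl) (hr.mem_right hjl) hjl
      (by simp only [Between]; omega)
    simp only [Between] at this; omega
  · refine Or.inr ⟨hik.1, hjl.1, hik.2.2.1, hjl.2.2.1, fun a b ha hb hab hb' hrab => ?_⟩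
    have hbik := between_of_krRel hik ha hb hrab (by simp only [Between] at *; omega)
    have hajl := between_of_krRel hjl hb ha (hr.symm hrab) (by simp only [Between] at *; omega)
    have haj : a ≠ j := fun h => hjl.2.2.1 (h ▸ ha)
    simp only [Between] at *; omega

theorem le_krRel (hr : IsPartitionOn S r) {q : ℕ → ℕ → Prop}
    (hq : IsPartitionOn (Idx n \ S) q) (hnc : NonCrossing (relJoin r q)) :
    RelLE q (krRel n S r) := by
  have hdisj : Disjoint S (Idx n \ S) := Set.disjoint_sdiff_right
  intro i j hij
  wlog hle : i ≤ j generalizing i j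
  · exact krRel_symm (this j i (hq.symm hij) (by omega))
  obtain ⟨hi, hiS⟩ := hq.mem_left hij
  obtain ⟨hj, hjS⟩ := hq.mem_right hij
  refine ⟨hi, hj, hiS, hjS, fun k l hk hl hbk hbl hkl => ?_⟩
  have hki : k ≠ i := fun h => hiS (h ▸ hk)
  have hkj : k ≠ j := fun h => hjS (h ▸ hk)
  simp only [Between] at hbk hbl
  -- A block of `r` leaving the interval from `i` to `j` would cross the arc `i j` of `q`.
  rcases (by omega : l < i ∨ j < l) with hli | hjl
  · have := hr.relJoin_mem_iff hq hdisj
      (hnc l i k j hli (by omega) (by omega) (Or.inl (hr.symm hkl)) (Or.inr hij))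
    exact hiS (this.1 hl)
  · have := hr.relJoin_mem_iff hq hdisj
      (hnc i k j l (by omega) (by omega) hjl (Or.inr hij) (Or.inl hkl))
    exact hiS (this.2 hk)

end Kreweras

/-- For a partial partition `(p,S)` of `[n]` with `p` non-crossing,
the explicitly defined `krRel n S p` is a partial partition with support `[n] \ S`,
its join with `p` is a non-crossing partition of `[n]`, and it is the greatest
partial partition with support `[n] \ S` whose join with `p` is a non-crossing
partition of `[n]`. -/
theorem kreweras_complement_isGreatest
    (n : ℕ) (S : Set ℕ) (hS : S ⊆ Idx n)
    (p : ℕ → ℕ → Prop) (hp : IsPartitionOn S p) (hpnc : NonCrossing p) :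
    IsPartitionOn (Idx n \ S) (krRel n S p) ∧
    IsPartitionOn (Idx n) (relJoin p (krRel n S p)) ∧
    NonCrossing (relJoin p (krRel n S p)) ∧
    (∀ q : ℕ → ℕ → Prop, IsPartitionOn (Idx n \ S) q →
      IsPartitionOn (Idx n) (relJoin p q) → NonCrossing (relJoin p q) →
      RelLE q (krRel n S p)) := by
  have hkr : IsPartitionOn (Idx n \ S) (krRel n S p) := isPartitionOn_krRel hp.1
  have hjoin := hp.relJoin hkr Set.disjoint_sdiff_right
  rw [Set.union_sdiff_cancel hS] at hjoin
  exact ⟨hkr, hjoin, nonCrossing_relJoin_krRel hp hpnc, fun q hq _ hnc => le_krRel hp hq hnc⟩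

end NCPaper
end

section
/- For every non-crossing partition π of [2k], kr′(π) = kr′(π ∨ π₀), where ∨ denotes the join in the refinement lattice of all partitions of [2k]. -/
namespace NCPaper

/-! The Kreweras complement relates two points of `Sᶜ` iff no block of the transported
partition has elements both inside and outside the interval between them. Under `fS` the blocks
`{2i, 2i+1}` of `π₀` become pairs `{4i, 4i+1}` of consecutive integers and `{2k, 1}` becomes the
extreme pair `{4k, 1}`, so no such interval separates a block of `π₀`. Hence, for `i ∼ j` in
`kr′(π)`, "lying inside the interval" is a partition of `[2k]` above both `π` and `π₀`, so above
their join. The converse inclusion holds because `kr` is order-reversing. -/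

lemma IsPartitionOn.left_mem {S : Set ℕ} {r : ℕ → ℕ → Prop} (h : IsPartitionOn S r)
    {i j : ℕ} (hij : r i j) : i ∈ S :=
  (h.2.2 i).1 (h.2.1 _ _ _ hij (h.1 _ _ hij))

lemma IsPartitionOn.right_mem {S : Set ℕ} {r : ℕ → ℕ → Prop} (h : IsPartitionOn S r)
    {i j : ℕ} (hij : r i j) : j ∈ S :=
  h.left_mem (h.1 _ _ hij)

def kerOn (S : Set ℕ) (p : ℕ → Prop) : ℕ → ℕ → Prop := fun u v => u ∈ S ∧ v ∈ S ∧ (p u ↔ p v)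

lemma isPartitionOn_kerOn (S : Set ℕ) (p : ℕ → Prop) : IsPartitionOn S (kerOn S p) :=
  ⟨fun _ _ ⟨hu, hv, h⟩ => ⟨hv, hu, h.symm⟩,
    fun _ _ _ ⟨hu, _, h⟩ ⟨_, hw, h'⟩ => ⟨hu, hw, h.trans h'⟩,
    fun _ => ⟨fun h => h.1, fun h => ⟨h, h, Iff.rfl⟩⟩⟩

lemma mapRel_mono (f : ℕ → ℕ) {r s : ℕ → ℕ → Prop} (h : RelLE r s) :
    RelLE (mapRel f r) (mapRel f s) :=
  fun _ _ ⟨i, j, hi, hj, hij⟩ => ⟨i, j, hi, hj, h i j hij⟩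

lemma mapRel_symm (f : ℕ → ℕ) {r : ℕ → ℕ → Prop} (h : ∀ i j, r i j → r j i) :
    ∀ a b, mapRel f r a b → mapRel f r b a :=
  fun _ _ ⟨i, j, hi, hj, hij⟩ => ⟨j, i, hj, hi, h i j hij⟩

lemma krRel_anti (n : ℕ) (S : Set ℕ) {r s : ℕ → ℕ → Prop} (h : RelLE r s) :
    RelLE (krRel n S s) (krRel n S r) :=
  fun _ _ ⟨hi, hj, hiS, hjS, hsep⟩ =>
    ⟨hi, hj, hiS, hjS, fun k l hk hl hin hout hkl => hsep k l hk hl hin hout (h k l hkl)⟩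

lemma krNested_anti (k : ℕ) {r s : ℕ → ℕ → Prop} (h : RelLE r s) :
    RelLE (krNested k s) (krNested k r) :=
  fun i j => krRel_anti _ _ (mapRel_mono fS h) (fSc i) (fSc j)

lemma between_iff_of_krRel {n : ℕ} {S : Set ℕ} {r : ℕ → ℕ → Prop}
    (hsymm : ∀ a b, r a b → r b a) {i j a b : ℕ} (h : krRel n S r i j)
    (ha : a ∈ S) (hb : b ∈ S) (hab : r a b) : Between i j a ↔ Between i j b := by
  obtain ⟨-, -, -, -, hsep⟩ := h
  constructor
  · exact fun hin => by_contra fun hout => hsep a b ha hb hin hout hab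
  · exact fun hin => by_contra fun hout => hsep b a hb ha hin hout (hsymm a b hab)

lemma between_fS_iff_of_piZero {k i j x y : ℕ}
    (hi : fSc i ∈ Idx (4 * k)) (hj : fSc j ∈ Idx (4 * k)) (h : piZero k x y) :
    Between (fSc i) (fSc j) (fS x) ↔ Between (fSc i) (fSc j) (fS y) := by
  obtain ⟨hx, hy, hc⟩ := h
  simp only [Idx, Set.mem_Icc] at hx hy hi hj
  simp only [Nat.even_iff] at hc
  simp only [fS, fSc, Between] at hi hj ⊢
  rcases hc with rfl | ⟨he, rfl⟩ | ⟨he, rfl⟩ | ⟨rfl, rfl⟩ | ⟨rfl, rfl⟩ <;> omega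

lemma krNested_le_of_isLeast_join {k : ℕ} {π q : ℕ → ℕ → Prop}
    (hπ : IsPartitionOn (Idx (2 * k)) π)
    (hleast : ∀ s : ℕ → ℕ → Prop, IsPartitionOn (Idx (2 * k)) s →
      RelLE π s → RelLE (piZero k) s → RelLE q s) :
    RelLE (krNested k π) (krNested k q) := by
  intro i j hπij
  set inside : ℕ → Prop := fun x => Between (fSc i) (fSc j) (fS x)
  have hπ_le : RelLE π (kerOn (Idx (2 * k)) inside) := fun u v huv =>
    ⟨hπ.left_mem huv, hπ.right_mem huv,
      between_iff_of_krRel (mapRel_symm fS hπ.1) hπij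
        ⟨u, hπ.left_mem huv, rfl⟩ ⟨v, hπ.right_mem huv, rfl⟩ ⟨u, v, rfl, rfl, huv⟩⟩
  have hπ₀_le : RelLE (piZero k) (kerOn (Idx (2 * k)) inside) := fun u v huv =>
    ⟨huv.1, huv.2.1, between_fS_iff_of_piZero hπij.1 hπij.2.1 huv⟩
  have hq_le := hleast _ (isPartitionOn_kerOn _ _) hπ_le hπ₀_le
  refine ⟨hπij.1, hπij.2.1, hπij.2.2.1, hπij.2.2.2.1, ?_⟩
  rintro _ _ - - hin hout ⟨u, v, rfl, rfl, huv⟩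
  exact hout ((hq_le u v huv).2.2.1 hin)

theorem krNested_join_piZero_general
    (k : ℕ) (π : ℕ → ℕ → Prop)
    (hπ : IsPartitionOn (Idx (2 * k)) π)
    (q : ℕ → ℕ → Prop)
    (hπq : RelLE π q)
    (hleast : ∀ s : ℕ → ℕ → Prop, IsPartitionOn (Idx (2 * k)) s →
      RelLE π s → RelLE (piZero k) s → RelLE q s) :
    krNested k π = krNested k q :=
  funext₂ fun i j => propext
    ⟨krNested_le_of_isLeast_join hπ hleast i j, krNested_anti k hπq i j⟩

/-- for every non-crossing partition `π` of `[2k]`,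
`kr′(π) = kr′(π ∨ π₀)`, where `π ∨ π₀` is the join of `π` and `π₀` in the
refinement lattice of all partitions of `[2k]` (characterized below as the
least partition of `[2k]` lying above both `π` and `π₀`). -/
theorem krNested_join_piZero
    (k : ℕ) (π : ℕ → ℕ → Prop)
    (hπ : IsPartitionOn (Idx (2 * k)) π) (hnc : NonCrossing π)
    (q : ℕ → ℕ → Prop) (hq : IsPartitionOn (Idx (2 * k)) q)
    (hπq : RelLE π q) (h0q : RelLE (piZero k) q)
    (hleast : ∀ s : ℕ → ℕ → Prop, IsPartitionOn (Idx (2 * k)) s →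
      RelLE π s → RelLE (piZero k) s → RelLE q s) :
    krNested k π = krNested k q :=
  krNested_join_piZero_general k π hπ q hπq hleast

end NCPaper
end

section
/- For every partition π of [2k], one has kr′(π) ≥ π₁; that is, 2i−1 ∼_{kr′(π)} 2i for every 1 ≤ i ≤ k. -/
/-!
`kr′` places `2i - 1` and `2i` at the positions `4i - 2` and `4i - 1` of `[4k]`, which are
consecutive and both outside the support `S` of the transported partition. No element of `S`
lies between them, so the condition defining the Kreweras complement holds vacuously, whatever
`π` is.
-/

namespace NCPaper

lemma krRel_of_forall_not_between {n : ℕ} {S : Set ℕ} {r : ℕ → ℕ → Prop} {i j : ℕ}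
    (hi : i ∈ Idx n) (hj : j ∈ Idx n) (hS : ∀ k ∈ S, ¬ Between i j k) : krRel n S r i j :=
  ⟨hi, hj, fun h => hS i h ⟨min_le_left i j, le_max_left i j⟩,
    fun h => hS j h ⟨min_le_right i j, le_max_right i j⟩, fun k _ hk _ hB _ _ => hS k hk hB⟩

lemma eq_or_eq_of_between {a b x : ℕ} (h : Between a b x) (hab : b ≤ a + 1) (hba : a ≤ b + 1) :
    x = a ∨ x = b := by
  obtain ⟨h₁, h₂⟩ := h
  omega

lemma fS_of_even {m : ℕ} (h : m % 2 = 0) : fS m = 2 * m := by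
  simp [fS, h]

lemma fS_of_odd {m : ℕ} (h : m % 2 = 1) : fS m = 2 * m - 1 := by
  simp [fS, h]

lemma fSc_of_even {i : ℕ} (h : i % 2 = 0) : fSc i = 2 * i - 1 := by
  simp [fSc, h]

lemma fSc_of_odd {i : ℕ} (h : i % 2 = 1) : fSc i = 2 * i := by
  simp [fSc, h]

/-- `fS` takes values `≡ 0, 1 (mod 4)` and `fSc` values `≡ 2, 3 (mod 4)` on positive inputs. -/
lemma fS_ne_fSc {m i : ℕ} (hi : 1 ≤ i) : fS m ≠ fSc i := by
  rcases Nat.mod_two_eq_zero_or_one m with hm | hm <;>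
    rcases Nat.mod_two_eq_zero_or_one i with hi' | hi' <;>
    simp only [fS_of_even, fS_of_odd, fSc_of_even, fSc_of_odd, hm, hi'] <;> omega

lemma fSc_mem_Idx {k i : ℕ} (hi : i ∈ Idx (2 * k)) : fSc i ∈ Idx (4 * k) := by
  simp only [Idx, Set.mem_Icc] at hi ⊢
  rcases Nat.mod_two_eq_zero_or_one i with h | h <;>
    simp only [fSc_of_even, fSc_of_odd, h] <;> omega

lemma fSc_succ_of_odd {i : ℕ} (h : Odd i) : fSc (i + 1) = fSc i + 1 := by
  rw [Nat.odd_iff] at h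
  rw [fSc_of_odd h, fSc_of_even (by omega)]
  omega

lemma fSc_adjacent_of_piOne {k i j : ℕ} (h : piOne k i j) :
    fSc j ≤ fSc i + 1 ∧ fSc i ≤ fSc j + 1 := by
  obtain ⟨-, -, rfl | ⟨hi, rfl⟩ | ⟨hj, rfl⟩⟩ := h
  · omega
  · rw [fSc_succ_of_odd hi]; omega
  · rw [fSc_succ_of_odd hj]; omega

lemma piOne_two_mul_sub_one {k i : ℕ} (h₁ : 1 ≤ i) (hk : i ≤ k) :
    piOne k (2 * i - 1) (2 * i) := by
  refine ⟨⟨by omega, by omega⟩, ⟨by omega, by omega⟩, Or.inr (Or.inl ⟨?_, by omega⟩)⟩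
  rw [Nat.odd_iff]
  omega

theorem krNested_ge_piOne_general
    (k : ℕ) (π : ℕ → ℕ → Prop) :
    RelLE (piOne k) (krNested k π) ∧
    (∀ i, 1 ≤ i → i ≤ k → krNested k π (2 * i - 1) (2 * i)) := by
  have hle : RelLE (piOne k) (krNested k π) := by
    intro i j hij
    refine krRel_of_forall_not_between (fSc_mem_Idx hij.1) (fSc_mem_Idx hij.2.1) ?_
    rintro _ ⟨m, -, rfl⟩ hm
    obtain ⟨h₁, h₂⟩ := fSc_adjacent_of_piOne hij
    rcases eq_or_eq_of_between hm h₁ h₂ with h | h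
    exacts [fS_ne_fSc hij.1.1 h, fS_ne_fSc hij.2.1.1 h]
  exact ⟨hle, fun i h₁ hk => hle _ _ (piOne_two_mul_sub_one h₁ hk)⟩

/-- for every partition `π` of `[2k]`, `kr′(π) ≥ π₁`; that is,
`2i-1 ∼ 2i` in `kr′(π)` for every `1 ≤ i ≤ k`. -/
theorem krNested_ge_piOne
    (k : ℕ) (π : ℕ → ℕ → Prop) (hπ : IsPartitionOn (Idx (2 * k)) π) :
    RelLE (piOne k) (krNested k π) ∧
    (∀ i, 1 ≤ i → i ≤ k → krNested k π (2 * i - 1) (2 * i)) :=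
  krNested_ge_piOne_general k π

end NCPaper
end

section
/- Let π ∈ NC(2n) with π ≥ π₀. Then K(F(π)) = G(kr′(π)). (Here F(π) is non-crossing and kr′(π) ≥ π₁, so both sides are defined.) -/
namespace NCPaper

/-! For `i ≤ j`, `i ∼ j` in `K(F(π))` says that no block of `π` joins an odd position of
`[2i, 2j - 1]` to an odd position outside it, while `i ∼ j` in `G(kr′(π))` says the same for
arbitrary positions (the elements of `S` between `4i - 1` and `4j - 1` are the images of
`[2i, 2j - 1]`). Since `[2i, 2j - 1]` is a union of blocks `{2m, 2m + 1}` of `π₀ ≤ π`, each of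
which contains an odd position, the two conditions agree. -/

open Set
open scoped Interval

theorem forall_not_rel_iff_of_le {σ π : ℕ → ℕ → Prop} {A D T : Set ℕ}
    (hσπ : RelLE σ π) (hsymm : ∀ k l, π k l → π l k)
    (htrans : ∀ k l m, π k l → π l m → π k m) (hA : ∀ k l, σ k l → (k ∈ A ↔ l ∈ A))
    (hTD : T ⊆ D) (hT : ∀ k ∈ D, ∃ t ∈ T, σ k t) :
    (∀ k ∈ D, ∀ l ∈ D, k ∈ A → l ∉ A → ¬ π k l) ↔
      (∀ k ∈ T, ∀ l ∈ T, k ∈ A → l ∉ A → ¬ π k l) := by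
  refine ⟨fun h k hk l hl => h k (hTD hk) l (hTD hl), fun h k hk l hl hkA hlA hkl => ?_⟩
  obtain ⟨s, hs, hks⟩ := hT k hk
  obtain ⟨t, ht, hlt⟩ := hT l hl
  exact h s hs t ht ((hA k s hks).1 hkA) (fun htA => hlA ((hA l t hlt).2 htA))
    (htrans _ _ _ (hsymm _ _ (hσπ k s hks)) (htrans _ _ _ hkl (hσπ l t hlt)))

theorem mapRel_apply_apply {f : ℕ → ℕ} (hf : Function.Injective f) {r : ℕ → ℕ → Prop}
    {a b : ℕ} : mapRel f r (f a) (f b) ↔ r a b :=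
  ⟨fun ⟨_, _, hi, hj, h⟩ => hf hi ▸ hf hj ▸ h, fun h => ⟨a, b, rfl, rfl, h⟩⟩

theorem ne_zero_of_mem_Idx {m k : ℕ} (hk : k ∈ Idx m) : k ≠ 0 :=
  Nat.one_le_iff_ne_zero.1 hk.1

theorem oddPos_injective : Function.Injective oddPos := by
  intro a b h; simp only [oddPos] at h; omega

theorem fS_injective : Function.Injective fS := by
  intro a b h; simp only [fS] at h; omega

theorem fSc_ne_fS {i : ℕ} (hi : i ≠ 0) (k : ℕ) : fSc i ≠ fS k := by
  simp only [fSc, fS]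
  rcases Nat.mod_two_eq_zero_or_one i with h | h <;>
    rcases Nat.mod_two_eq_zero_or_one k with h' | h' <;> omega

theorem krRel_image_iff {m : ℕ} {f : ℕ → ℕ} (hf : Function.Injective f) {S : Set ℕ}
    {r : ℕ → ℕ → Prop} {x y : ℕ} :
    krRel m (f '' S) (mapRel f r) x y ↔ x ∈ Idx m ∧ y ∈ Idx m ∧ x ∉ f '' S ∧ y ∉ f '' S ∧
      ∀ a ∈ S, ∀ b ∈ S, Between x y (f a) → ¬ Between x y (f b) → ¬ r a b := by
  refine and_congr_right fun _ => and_congr_right fun _ => and_congr_right fun _ =>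
    and_congr_right fun _ => ⟨fun h a ha b hb hxa hxb hab => ?_, ?_⟩
  · exact h _ _ (mem_image_of_mem f ha) (mem_image_of_mem f hb) hxa hxb
      ((mapRel_apply_apply hf).2 hab)
  · rintro h _ _ ⟨a, ha, rfl⟩ ⟨b, hb, rfl⟩ hxa hxb hab
    exact h a ha b hb hxa hxb ((mapRel_apply_apply hf).1 hab)

theorem oddPos_mem_Idx {n p : ℕ} (hp : p ∈ Idx n) : oddPos p ∈ Idx (2 * n) := by
  simp only [Idx, mem_Icc, oddPos] at hp ⊢; omega

theorem evenPos_mem_Idx_iff {n i : ℕ} : evenPos i ∈ Idx (2 * n) ↔ i ∈ Idx n := by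
  simp only [Idx, mem_Icc, evenPos]; omega

theorem fSc_two_mul_mem_Idx_iff {n i : ℕ} : fSc (2 * i) ∈ Idx (4 * n) ↔ i ∈ Idx n := by
  simp only [Idx, mem_Icc, fSc]; omega

theorem evenPos_ne_oddPos (i p : ℕ) (hp : p ≠ 0) : evenPos i ≠ oddPos p := by
  simp only [evenPos, oddPos]; omega

theorem between_evenPos_oddPos_iff {i j p : ℕ} (hp : p ≠ 0) :
    Between (evenPos i) (evenPos j) (oddPos p) ↔ p ∈ Ι i j := by
  simp only [Between, evenPos, oddPos, uIoc, mem_Ioc]; omega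

theorem between_fSc_fS_iff {i j k : ℕ} (hk : k ≠ 0) :
    Between (fSc (2 * i)) (fSc (2 * j)) (fS k) ↔ k ∈ Ico (2 * min i j) (2 * max i j) := by
  simp only [Between, fSc, fS, mem_Ico]; omega

theorem oddPos_mem_Ico_iff {i j p : ℕ} (hp : p ≠ 0) :
    oddPos p ∈ Ico (2 * min i j) (2 * max i j) ↔ p ∈ Ι i j := by
  simp only [oddPos, uIoc, mem_Ico, mem_Ioc]; omega

theorem Kmap_iff {n : ℕ} {r : ℕ → ℕ → Prop} {i j : ℕ} :
    Kmap n r i j ↔ i ∈ Idx n ∧ j ∈ Idx n ∧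
      ∀ p ∈ Idx n, ∀ q ∈ Idx n, p ∈ Ι i j → q ∉ Ι i j → ¬ r p q := by
  have hnot_odd (a : ℕ) : evenPos a ∉ oddPos '' Idx n := by
    rintro ⟨p, hp, h⟩; exact evenPos_ne_oddPos a p (ne_zero_of_mem_Idx hp) h.symm
  simp only [Kmap, krRel_image_iff oddPos_injective, evenPos_mem_Idx_iff, hnot_odd,
    not_false_eq_true, true_and]
  refine and_congr_right fun _ => and_congr_right fun _ => ?_
  refine forall₂_congr fun p hp => forall₂_congr fun q hq => ?_
  rw [between_evenPos_oddPos_iff (ne_zero_of_mem_Idx hp),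
    between_evenPos_oddPos_iff (ne_zero_of_mem_Idx hq)]

theorem krNested_two_mul_iff {n : ℕ} {r : ℕ → ℕ → Prop} {i j : ℕ} :
    krNested n r (2 * i) (2 * j) ↔ i ∈ Idx n ∧ j ∈ Idx n ∧
      ∀ k ∈ Idx (2 * n), ∀ l ∈ Idx (2 * n), k ∈ Ico (2 * min i j) (2 * max i j) →
        l ∉ Ico (2 * min i j) (2 * max i j) → ¬ r k l := by
  have hnot_fS {a : ℕ} (ha : a ∈ Idx n) : fSc (2 * a) ∉ fS '' Idx (2 * n) := by
    rintro ⟨k, -, h⟩; exact fSc_ne_fS (by simp [ne_zero_of_mem_Idx ha]) k h.symm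
  simp only [krNested, krRel_image_iff fS_injective, fSc_two_mul_mem_Idx_iff]
  refine and_congr_right fun hi => and_congr_right fun hj => ?_
  simp only [hnot_fS hi, hnot_fS hj, not_false_eq_true, true_and]
  refine forall₂_congr fun k hk => forall₂_congr fun l hl => ?_
  rw [between_fSc_fS_iff (ne_zero_of_mem_Idx hk),
    between_fSc_fS_iff (ne_zero_of_mem_Idx hl)]

theorem piZero_mem_Ico_iff {n i j k l : ℕ} (hi : i ∈ Idx n) (hj : j ∈ Idx n)
    (hkl : piZero n k l) :
    k ∈ Ico (2 * min i j) (2 * max i j) ↔ l ∈ Ico (2 * min i j) (2 * max i j) := by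
  obtain ⟨-, -, h⟩ := hkl
  simp only [Idx, mem_Icc] at hi hj
  simp only [mem_Ico, Nat.even_iff] at h ⊢
  omega

theorem exists_oddPos_piZero {n k : ℕ} (hk : k ∈ Idx (2 * n)) :
    ∃ t ∈ oddPos '' Idx n, piZero n k t := by
  obtain ⟨p, hp, hkp⟩ : ∃ p ∈ Idx n, k = 2 * p - 1 ∨ k = 2 * p - 2 ∨ (k = 2 * n ∧ p = 1) := by
    simp only [Idx, mem_Icc] at hk ⊢
    rcases Nat.even_or_odd' k with ⟨m, rfl | rfl⟩
    · by_cases hmn : m = n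
      · exact ⟨1, by omega, by omega⟩
      · exact ⟨m + 1, by omega, by omega⟩
    · exact ⟨m + 1, by omega, by omega⟩
  refine ⟨oddPos p, mem_image_of_mem _ hp, hk, oddPos_mem_Idx hp, ?_⟩
  simp only [Idx, mem_Icc] at hp
  simp only [oddPos, Nat.even_iff]
  omega

theorem K_F_eq_G_krNested_general
    (n : ℕ) (π : ℕ → ℕ → Prop)
    (hπ : IsPartitionOn (Idx (2 * n)) π)
    (h0 : RelLE (piZero n) π) :
    Kmap n (Fmap π) = Gmap (krNested n π) := by
  obtain ⟨hsymm, htrans, -⟩ := hπ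
  ext i j
  rw [Kmap_iff, Gmap, krNested_two_mul_iff]
  refine and_congr_right fun hi => and_congr_right fun hj => ?_
  rw [forall_not_rel_iff_of_le h0 hsymm htrans (fun k l => piZero_mem_Ico_iff hi hj)
    (image_subset_iff.2 fun p => oddPos_mem_Idx) fun k => exists_oddPos_piZero]
  simp only [forall_mem_image]
  refine forall₂_congr fun p hp => forall₂_congr fun q hq => ?_
  rw [oddPos_mem_Ico_iff (ne_zero_of_mem_Idx hp),
    oddPos_mem_Ico_iff (ne_zero_of_mem_Idx hq)]
  rfl

/-- for `π ∈ NC(2n)` with `π ≥ π₀`, `K(F(π)) = G(kr′(π))`. -/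
theorem K_F_eq_G_krNested
    (n : ℕ) (π : ℕ → ℕ → Prop)
    (hπ : IsPartitionOn (Idx (2 * n)) π) (hnc : NonCrossing π)
    (h0 : RelLE (piZero n) π) :
    Kmap n (Fmap π) = Gmap (krNested n π) :=
  K_F_eq_G_krNested_general n π hπ h0

end NCPaper
end

section
/- Let p be a non-crossing partition of [n] and let B and B′ be adjacent blocks of p. Then B ⪯ B′, or B′ ⪯ B, or d_p(B) = d_p(B′). -/
/-!
Two distinct blocks of a non-crossing partition are either nested or lie side by side. In the
nested case there is nothing to prove. If `B` lies to the left of `B'`, merge them: in the merged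
partition, which is non-crossing by adjacency, the block `B ∪ B'` spans `[min B, max B']`, and
every other block `C` is nested in it, contains it, or is disjoint from its span. Hence `C`
contains `B` iff it contains `B ∪ B'` iff it contains `B'`, so the chains of blocks above `B` and
above `B'` are the same beyond their first element, and the depths agree.
-/

namespace NCPaper

section Blocks

variable {n : ℕ} {p : ℕ → ℕ → Prop} {B B' C : Set ℕ}

lemma IsBlock.rel (hp : IsPartitionOn (Idx n) p) (hB : IsBlock p B) {x y : ℕ}
    (hx : x ∈ B) (hy : y ∈ B) : p x y := by
  obtain ⟨i, -, rfl⟩ := hB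
  exact hp.2.1 x i y (hp.1 i x hx) hy

lemma IsBlock.mem_of_rel (hp : IsPartitionOn (Idx n) p) (hB : IsBlock p B) {x y : ℕ}
    (hx : x ∈ B) (hxy : p x y) : y ∈ B := by
  obtain ⟨i, -, rfl⟩ := hB
  exact hp.2.1 i x y hx hxy

lemma IsBlock.nonempty (hB : IsBlock p B) : B.Nonempty := by
  obtain ⟨i, hi, rfl⟩ := hB
  exact ⟨i, hi⟩

lemma IsBlock.bddAbove (hp : IsPartitionOn (Idx n) p) (hB : IsBlock p B) : BddAbove B :=
  ⟨n, fun x hx => ((hp.2.2 x).1 (hB.rel hp hx hx)).2⟩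

lemma IsBlock.eq_of_mem (hp : IsPartitionOn (Idx n) p) (hB : IsBlock p B) (hC : IsBlock p C)
    {x : ℕ} (hxB : x ∈ B) (hxC : x ∈ C) : B = C :=
  Set.ext fun _ => ⟨fun hy => hC.mem_of_rel hp hxC (hB.rel hp hxB hy),
    fun hy => hB.mem_of_rel hp hxB (hC.rel hp hxC hy)⟩

end Blocks

section NonCrossing

variable {r : ℕ → ℕ → Prop} {S T : Set ℕ}

lemma NonCrossing.nested_or_separated_of_sInf_lt (hr : NonCrossing r)
    (hS : S.Nonempty) (hSb : BddAbove S) (hT : T.Nonempty)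
    (hrS : r (sInf S) (sSup S)) (hrT : r (sInf T) (sSup T))
    (hST : ∀ x ∈ S, ∀ y ∈ T, ¬ r x y) (hTS : ∀ x ∈ T, ∀ y ∈ S, ¬ r x y)
    (hlt : sInf S < sInf T) : Nested T S ∨ sSup S < sInf T := by
  have hSinf := Nat.sInf_mem hS
  have hSsup := Nat.sSup_mem hS hSb
  have hTinf := Nat.sInf_mem hT
  rcases lt_trichotomy (sSup S) (sInf T) with h | h | h
  · exact Or.inr h
  · exact absurd (h ▸ hrS) (hST _ hSinf _ hTinf)
  · refine Or.inl ⟨hlt, ?_⟩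
    rcases lt_trichotomy (sSup T) (sSup S) with h' | h' | h'
    · exact h'
    · exact absurd (h' ▸ hrT) (hTS _ hTinf _ hSsup)
    · exact absurd (hr _ _ _ _ hlt h h' hrS hrT) (hST _ hSinf _ hTinf)

lemma NonCrossing.nested_or_nested_or_separated (hr : NonCrossing r)
    (hS : S.Nonempty) (hSb : BddAbove S) (hT : T.Nonempty) (hTb : BddAbove T)
    (hrS : r (sInf S) (sSup S)) (hrT : r (sInf T) (sSup T))
    (hST : ∀ x ∈ S, ∀ y ∈ T, ¬ r x y) (hTS : ∀ x ∈ T, ∀ y ∈ S, ¬ r x y) :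
    Nested S T ∨ Nested T S ∨ sSup S < sInf T ∨ sSup T < sInf S := by
  rcases lt_trichotomy (sInf S) (sInf T) with h | h | h
  · rcases hr.nested_or_separated_of_sInf_lt hS hSb hT hrS hrT hST hTS h with h' | h'
    · exact Or.inr (Or.inl h')
    · exact Or.inr (Or.inr (Or.inl h'))
  · exact absurd (h ▸ hrS) (hTS _ (Nat.sInf_mem hT) _ (Nat.sSup_mem hS hSb))
  · rcases hr.nested_or_separated_of_sInf_lt hT hTb hS hrT hrS hTS hST h with h' | h'
    · exact Or.inl h'
    · exact Or.inr (Or.inr (Or.inr h'))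

end NonCrossing

section Adjacent

variable {n : ℕ} {p : ℕ → ℕ → Prop} {B B' C : Set ℕ}

lemma IsBlock.nested_or_nested_or_separated (hp : IsPartitionOn (Idx n) p)
    (hnc : NonCrossing p) (hB : IsBlock p B) (hB' : IsBlock p B') (hne : B ≠ B') :
    Nested B B' ∨ Nested B' B ∨ sSup B < sInf B' ∨ sSup B' < sInf B :=
  hnc.nested_or_nested_or_separated hB.nonempty (hB.bddAbove hp) hB'.nonempty
    (hB'.bddAbove hp)
    (hB.rel hp (Nat.sInf_mem hB.nonempty) (Nat.sSup_mem hB.nonempty (hB.bddAbove hp)))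
    (hB'.rel hp (Nat.sInf_mem hB'.nonempty) (Nat.sSup_mem hB'.nonempty (hB'.bddAbove hp)))
    (fun _ hx _ hy hxy => hne (hB.eq_of_mem hp hB' (hB.mem_of_rel hp hx hxy) hy))
    (fun _ hx _ hy hxy => hne (hB.eq_of_mem hp hB' hy (hB'.mem_of_rel hp hx hxy)))

lemma mergeRel_comm : mergeRel p B B' = mergeRel p B' B := by
  funext i j
  rw [mergeRel, mergeRel, Set.union_comm]

lemma mem_union_iff_of_mergeRel (hp : IsPartitionOn (Idx n) p) (hB : IsBlock p B)
    (hB' : IsBlock p B') {x y : ℕ} (hxy : mergeRel p B B' x y) :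
    x ∈ B ∪ B' ↔ y ∈ B ∪ B' := by
  rcases hxy with hxy | ⟨-, -, hx, hy⟩
  · have hyx := hp.1 x y hxy
    constructor <;> rintro (h | h)
    exacts [Or.inl (hB.mem_of_rel hp h hxy), Or.inr (hB'.mem_of_rel hp h hxy),
      Or.inl (hB.mem_of_rel hp h hyx), Or.inr (hB'.mem_of_rel hp h hyx)]
  · exact iff_of_true hx hy

lemma nested_iff_nested_of_separated (hp : IsPartitionOn (Idx n) p) (hB : IsBlock p B)
    (hB' : IsBlock p B') (hm : NonCrossing (mergeRel p B B')) (hsep : sSup B < sInf B')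
    (hC : IsBlock p C) : Nested B C ↔ Nested B' C := by
  have hBb := hB.bddAbove hp
  have hB'b := hB'.bddAbove hp
  have hBle := Nat.sInf_le (Nat.sSup_mem hB.nonempty hBb)
  have hB'le := Nat.sInf_le (Nat.sSup_mem hB'.nonempty hB'b)
  by_cases hCB : C = B
  · subst hCB; simp only [Nested]; omega
  by_cases hCB' : C = B'
  · subst hCB'; simp only [Nested]; omega
  set D := B ∪ B'
  have hDne : D.Nonempty := hB.nonempty.inl
  have hDb : BddAbove D := hBb.union hB'b
  have hDinf : sInf D = sInf B := by
    rw [csInf_union (OrderBot.bddBelow B) hB.nonempty (OrderBot.bddBelow B') hB'.nonempty]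
    omega
  have hDsup : sSup D = sSup B' := by
    rw [csSup_union hBb hB.nonempty hB'b hB'.nonempty]
    omega
  have hCD : ∀ x ∈ C, x ∉ D := by
    rintro x hx (hxB | hxB')
    exacts [hCB (hC.eq_of_mem hp hB hx hxB), hCB' (hC.eq_of_mem hp hB' hx hxB')]
  have hDrel : ∀ x ∈ D, ∀ y ∈ D, mergeRel p B B' x y := by
    intro x hx y hy
    have self : ∀ z ∈ D, p z z := by
      rintro z (hz | hz)
      exacts [hB.rel hp hz hz, hB'.rel hp hz hz]
    exact Or.inr ⟨self x hx, self y hy, hx, hy⟩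
  have key := hm.nested_or_nested_or_separated hC.nonempty (hC.bddAbove hp) hDne hDb
    (Or.inl (hC.rel hp (Nat.sInf_mem hC.nonempty) (Nat.sSup_mem hC.nonempty (hC.bddAbove hp))))
    (hDrel _ (Nat.sInf_mem hDne) _ (Nat.sSup_mem hDne hDb))
    (fun x hx _ hy hxy => hCD x hx ((mem_union_iff_of_mergeRel hp hB hB' hxy).2 hy))
    (fun _ hy x hx hyx => hCD x hx ((mem_union_iff_of_mergeRel hp hB hB' hyx).1 hy))
  simp only [Nested, hDinf, hDsup] at key ⊢
  omega

end Adjacent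

section Depth

variable {p : ℕ → ℕ → Prop} {B B' : Set ℕ}

def IsNestedChain (p : ℕ → ℕ → Prop) (c : ℕ → Set ℕ) (m : ℕ) : Prop :=
  (∀ i, 1 ≤ i → i ≤ m → IsBlock p (c i)) ∧ (∀ i, 1 ≤ i → i < m → Nested (c i) (c (i + 1)))

lemma IsNestedChain.update_one {c : ℕ → Set ℕ} {m : ℕ} (hc : IsNestedChain p c m)
    (hB' : IsBlock p B') (h : ∀ C, IsBlock p C → Nested (c 1) C → Nested B' C) :
    IsNestedChain p (Function.update c 1 B') m := by
  constructor
  · intro i h1 h2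
    rcases eq_or_ne i 1 with rfl | hi
    · rwa [Function.update_self]
    · rw [Function.update_of_ne hi]
      exact hc.1 i h1 h2
  · intro i h1 h2
    rw [Function.update_of_ne (by omega : i + 1 ≠ 1)]
    rcases eq_or_ne i 1 with rfl | hi
    · rw [Function.update_self]
      exact h _ (hc.1 2 le_add_self h2) (hc.2 1 le_rfl h2)
    · rw [Function.update_of_ne hi]
      exact hc.2 i h1 h2

lemma depth_eq_of_nested_iff (hB : IsBlock p B) (hB' : IsBlock p B')
    (h : ∀ C, IsBlock p C → (Nested B C ↔ Nested B' C)) : depth p B = depth p B' := by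
  have transfer : ∀ {X Y : Set ℕ}, IsBlock p Y → (∀ C, IsBlock p C → Nested X C → Nested Y C) →
      ∀ m, (∃ c, c 1 = X ∧ IsNestedChain p c m) → ∃ c, c 1 = Y ∧ IsNestedChain p c m :=
    fun hY hXY _ ⟨c, hc1, hc⟩ =>
      ⟨_, Function.update_self .., hc.update_one hY (hc1 ▸ hXY)⟩
  unfold depth
  congr 1
  ext m
  exact ⟨transfer hB' (fun C hC => (h C hC).1) m, transfer hB (fun C hC => (h C hC).2) m⟩

end Depth

/-- if `B` and `B'` are adjacent blocks of a non-crossing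
partition `p` of `[n]`, then `B ⪯ B'`, or `B' ⪯ B`, or `d_p(B) = d_p(B')`. -/
theorem adjacent_blocks_trichotomy
    (n : ℕ) (p : ℕ → ℕ → Prop)
    (hp : IsPartitionOn (Idx n) p) (hnc : NonCrossing p)
    (B B' : Set ℕ) (hadj : Adjacent p B B') :
    Nested B B' ∨ Nested B' B ∨ depth p B = depth p B' := by
  obtain ⟨hB, hB', hne, hm⟩ := hadj
  rcases hB.nested_or_nested_or_separated hp hnc hB' hne with h | h | h | h
  · exact Or.inl h
  · exact Or.inr (Or.inl h)
  · exact Or.inr (Or.inr (depth_eq_of_nested_iff hB hB' fun C hC =>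
      nested_iff_nested_of_separated hp hB hB' hm h hC))
  · rw [mergeRel_comm] at hm
    exact Or.inr (Or.inr (depth_eq_of_nested_iff hB' hB fun C hC =>
      nested_iff_nested_of_separated hp hB' hB hm h hC).symm)

end NCPaper
end
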